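/- arXiv:1703.10374 — 3 statements merged into one kernel-verified Lean document; each statement's English description precedes it below -/
import Mathlib

section
/- For every metrizable space X over B0 there exist an ANR_{B0}-space M with weight w(M) ≤ max{w(X), w(B0), ℵ0} and an f.p. embedding i : X → M such that i(X) is closed in M. -/
open Set Topology TopologicalSpace unitInterval

universe u

/-- `f` is a fiber preserving (f.p.) map from `(X, πX)` to `(Y, πY)` over `B0`. -/
def IsFPMap {B0 X Y : Type u} [TopologicalSpace B0] [TopologicalSpace X] [TopologicalSpace Y]
    (πX : X → B0) (πY : Y → B0) (f : X → Y) : Prop :=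
  Continuous f ∧ ∀ x, πY (f x) = πX x

/-- Two f.p. maps are f.p. homotopic (homotopic over `B0`). -/
def FPHomotopic {B0 X Y : Type u} [TopologicalSpace B0] [TopologicalSpace X] [TopologicalSpace Y]
    (πX : X → B0) (πY : Y → B0) (f g : X → Y) : Prop :=
  ∃ H : X × unitInterval → Y, Continuous H ∧
    (∀ x, H (x, 0) = f x) ∧ (∀ x, H (x, 1) = g x) ∧
    ∀ x t, πY (H (x, t)) = πX x

/-- A metrizable space `(Y, πY)` over `B0` is an absolute neighbourhood retract over `B0`:
for every closed f.p. embedding into a metrizable space over `B0` there is a neighbourhood of the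
image and an f.p. retraction of that neighbourhood onto the image. -/
def IsFiberANR (B0 : Type u) [TopologicalSpace B0] (Y : Type u) [TopologicalSpace Y]
    (πY : Y → B0) : Prop :=
  MetrizableSpace Y ∧ Continuous πY ∧
  ∀ (X : Type u) (_ : TopologicalSpace X), MetrizableSpace X →
    ∀ πX : X → B0, Continuous πX →
    ∀ i : Y → X, IsClosedEmbedding i → (∀ y, πX (i y) = πY y) →
    ∃ U : Set X, U ∈ nhdsSet (Set.range i) ∧
    ∃ r : U → X, Continuous r ∧ (∀ u : U, r u ∈ Set.range i) ∧
      (∀ u : U, πX (r u) = πX u) ∧ ∀ u : U, (u : X) ∈ Set.range i → r u = u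

/-- A metrizable space `(Y, πY)` over `B0` is an absolute neighbourhood extensor over `B0`. -/
def IsFiberANE (B0 : Type u) [TopologicalSpace B0] (Y : Type u) [TopologicalSpace Y]
    (πY : Y → B0) : Prop :=
  MetrizableSpace Y ∧ Continuous πY ∧
  ∀ (X : Type u) (_ : TopologicalSpace X), MetrizableSpace X →
    ∀ πX : X → B0, Continuous πX →
    ∀ A : Set X, IsClosed A →
    ∀ f : A → Y, Continuous f → (∀ a : A, πY (f a) = πX a) →
    ∃ U : Set X, U ∈ nhdsSet A ∧
    ∃ g : U → Y, Continuous g ∧ (∀ u : U, πY (g u) = πX u) ∧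
      ∀ (a : X) (ha : a ∈ A) (hu : a ∈ U), g ⟨a, hu⟩ = f ⟨a, ha⟩

/-- An open cover of a topological space. -/
def IsOpenCover {Y : Type u} [TopologicalSpace Y] (𝒰 : Set (Set Y)) : Prop :=
  (∀ V ∈ 𝒰, IsOpen V) ∧ ⋃₀ 𝒰 = Set.univ

/-- Two maps are `𝒰`-near. -/
def UNear {X Y : Type u} (𝒰 : Set (Set Y)) (f g : X → Y) : Prop :=
  ∀ x, ∃ V ∈ 𝒰, f x ∈ V ∧ g x ∈ V

/-- The (topological) weight of a space: the least cardinality of a basis of its topology. -/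
noncomputable def tweight (X : Type u) [TopologicalSpace X] : Cardinal.{u} :=
  sInf {c | ∃ B : Set (Set X), IsTopologicalBasis B ∧ Cardinal.mk B = c}

/-- An inverse system in `Top_{B0}`: a directed set of indices, spaces over `B0` and f.p.
bonding maps. -/
structure FibInvSys (B0 : Type u) [TopologicalSpace B0] : Type (u + 1) where
  Idx : Type u
  le : Idx → Idx → Prop
  le_refl : ∀ a, le a a
  le_trans : ∀ a b c, le a b → le b c → le a c
  directed : ∀ a b, ∃ c, le a c ∧ le b c
  obj : Idx → Type u
  topInst : ∀ a, TopologicalSpace (obj a)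
  proj : ∀ a, obj a → B0
  proj_cont : ∀ a, @Continuous _ _ (topInst a) _ (proj a)
  bond : ∀ a a', le a a' → obj a' → obj a
  bond_cont : ∀ a a' (h : le a a'), @Continuous _ _ (topInst a') (topInst a) (bond a a' h)
  bond_fp : ∀ a a' (h : le a a') (x : obj a'), proj a (bond a a' h x) = proj a' x
  bond_id : ∀ a (x : obj a), bond a a (le_refl a) x = x
  bond_comp : ∀ a a' a'' (h : le a a') (h' : le a' a'') (x : obj a''),
    bond a a' h (bond a' a'' h' x) = bond a a'' (le_trans a a' a'' h h') x

attribute [instance] FibInvSys.topInst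

/-- A morphism from a space `(X, πX)` over `B0` to an inverse system in `Top_{B0}`. -/
structure FibMapToSys {B0 : Type u} [TopologicalSpace B0] (X : Type u) [TopologicalSpace X]
    (πX : X → B0) (S : FibInvSys B0) where
  maps : ∀ a : S.Idx, X → S.obj a
  cont : ∀ a, Continuous (maps a)
  fp : ∀ a x, S.proj a (maps a x) = πX x
  comm : ∀ a a' (h : S.le a a') (x : X), S.bond a a' h (maps a' x) = maps a x

section Conditions

variable {B0 : Type u} [TopologicalSpace B0] (X : Type u) [TopologicalSpace X]
  (πX : X → B0) (S : FibInvSys B0)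

/-- Condition (R1) of a resolution over `B0`. -/
def CondR1 (p : FibMapToSys X πX S) : Prop :=
  ∀ (P : Type u) (_ : TopologicalSpace P) (πP : P → B0), IsFiberANR B0 P πP →
    ∀ 𝒰 : Set (Set P), IsOpenCover 𝒰 →
    ∀ h : X → P, IsFPMap πX πP h →
    ∃ (a : S.Idx) (f : S.obj a → P), IsFPMap (S.proj a) πP f ∧
      UNear 𝒰 h fun x => f (p.maps a x)

/-- Condition (R2) of a resolution over `B0`. -/
def CondR2 (p : FibMapToSys X πX S) : Prop :=
  ∀ (P : Type u) (_ : TopologicalSpace P) (πP : P → B0), IsFiberANR B0 P πP →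
    ∀ 𝒰 : Set (Set P), IsOpenCover 𝒰 →
    ∃ 𝒰' : Set (Set P), IsOpenCover 𝒰' ∧
      ∀ (a : S.Idx) (f f' : S.obj a → P), IsFPMap (S.proj a) πP f → IsFPMap (S.proj a) πP f' →
        UNear 𝒰' (fun x => f (p.maps a x)) (fun x => f' (p.maps a x)) →
        ∃ (a' : S.Idx) (h : S.le a a'),
          UNear 𝒰 (fun y => f (S.bond a a' h y)) fun y => f' (S.bond a a' h y)

/-- `p` is a resolution over `B0`. -/
def IsFibResolution (p : FibMapToSys X πX S) : Prop :=
  CondR1 X πX S p ∧ CondR2 X πX S p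

/-- Condition (E1) of an expansion over `B0`. -/
def CondE1 (p : FibMapToSys X πX S) : Prop :=
  ∀ (P : Type u) (_ : TopologicalSpace P) (πP : P → B0), IsFiberANR B0 P πP →
    ∀ f : X → P, IsFPMap πX πP f →
    ∃ (a : S.Idx) (h : S.obj a → P), IsFPMap (S.proj a) πP h ∧
      FPHomotopic πX πP (fun x => h (p.maps a x)) f

/-- Condition (E2) of an expansion over `B0`. -/
def CondE2 (p : FibMapToSys X πX S) : Prop :=
  ∀ (P : Type u) (_ : TopologicalSpace P) (πP : P → B0), IsFiberANR B0 P πP →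
    ∀ (a : S.Idx) (f f' : S.obj a → P), IsFPMap (S.proj a) πP f → IsFPMap (S.proj a) πP f' →
      FPHomotopic πX πP (fun x => f (p.maps a x)) (fun x => f' (p.maps a x)) →
      ∃ (a' : S.Idx) (h : S.le a a'),
        FPHomotopic (S.proj a') πP (fun y => f (S.bond a a' h y)) fun y => f' (S.bond a a' h y)

/-- Two f.p. homotopies `S, T : X × I → P` are f.p. homotopic rel `X × ∂I`. -/
def FPHomotopicRelEnds {P : Type u} [TopologicalSpace P] (πP : P → B0)
    (S T : X × unitInterval → P) : Prop :=
  ∃ G : (X × unitInterval) × unitInterval → P, Continuous G ∧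
    (∀ z, G (z, 0) = S z) ∧ (∀ z, G (z, 1) = T z) ∧
    (∀ z s, πP (G (z, s)) = πX z.1) ∧
    (∀ x s, G ((x, 0), s) = S (x, 0)) ∧ ∀ x s, G ((x, 1), s) = S (x, 1)

/-- Condition (SE2) of a strong expansion over `B0`. -/
def CondSE2 (p : FibMapToSys X πX S) : Prop :=
  ∀ (P : Type u) (_ : TopologicalSpace P) (πP : P → B0), IsFiberANR B0 P πP →
    ∀ (a : S.Idx) (f0 f1 : S.obj a → P), IsFPMap (S.proj a) πP f0 → IsFPMap (S.proj a) πP f1 →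
    ∀ Sh : X × unitInterval → P, Continuous Sh → (∀ x t, πP (Sh (x, t)) = πX x) →
      (∀ x, Sh (x, 0) = f0 (p.maps a x)) → (∀ x, Sh (x, 1) = f1 (p.maps a x)) →
      ∃ (a' : S.Idx) (h : S.le a a') (H : S.obj a' × unitInterval → P),
        Continuous H ∧ (∀ z t, πP (H (z, t)) = S.proj a' z) ∧
        (∀ z, H (z, 0) = f0 (S.bond a a' h z)) ∧
        (∀ z, H (z, 1) = f1 (S.bond a a' h z)) ∧
        FPHomotopicRelEnds X πX πP Sh fun zt => H (p.maps a' zt.1, zt.2)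

/-- `p` is a strong expansion over `B0`. -/
def IsFibStrongExpansion (p : FibMapToSys X πX S) : Prop :=
  CondE1 X πX S p ∧ CondSE2 X πX S p

end Conditions

/-!
Choose a metric on `X` and a base point `x₀`. The Kuratowski map `κ x = d(x, ·) - d(x₀, ·)` is an
isometric embedding of `X` into the Banach space of bounded continuous functions, and its image is
closed in its convex hull `C`: for `c = ∑ wᵢ κ xᵢ` one has `wᵢ d(xᵢ, y) ≤ ‖κ y - c‖`. By Dugundji's
extension theorem every `C`-valued map on a closed subset of a metric space extends, so `B0 × C`
is an ANR (even an AR) over `B0`, and `x ↦ (πX x, κ x)` is a closed f.p. embedding. Finally `C` is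
the closure of the union of the compact hulls of finite subsets of `κ(D)`, `D` dense in `X`, which
bounds its weight by `max (w X) ℵ₀`.
-/

section Kuratowski

open Filter
open scoped BoundedContinuousFunction

variable {α : Type u} [MetricSpace α]

noncomputable def kuratowskiMap (x₀ x : α) : α →ᵇ ℝ :=
  BoundedContinuousFunction.mkOfBound ⟨fun y => dist x y - dist x₀ y, by fun_prop⟩
    (2 * dist x x₀) fun y z => by
      have hy := abs_dist_sub_le x x₀ y
      have hz := abs_dist_sub_le x x₀ z
      rw [Real.dist_eq, ContinuousMap.coe_mk]
      exact (abs_sub _ _).trans (by linarith)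

theorem kuratowskiMap_apply (x₀ x y : α) : kuratowskiMap x₀ x y = dist x y - dist x₀ y := rfl

theorem isometry_kuratowskiMap (x₀ : α) : Isometry (kuratowskiMap x₀) := by
  refine Isometry.of_dist_eq fun a b => le_antisymm ?_ ?_
  · refine (BoundedContinuousFunction.dist_le dist_nonneg).2 fun y => ?_
    rw [Real.dist_eq, kuratowskiMap_apply, kuratowskiMap_apply, sub_sub_sub_cancel_right]
    exact abs_dist_sub_le a b y
  · have := BoundedContinuousFunction.dist_coe_le_dist (f := kuratowskiMap x₀ a)
      (g := kuratowskiMap x₀ b) b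
    rw [Real.dist_eq, kuratowskiMap_apply, kuratowskiMap_apply] at this
    simpa [dist_comm] using this

/-- Evaluating `κ y - c` at `y`, for `c = ∑ wᵢ κ xᵢ`, gives `-∑ wᵢ d(xᵢ, y)`. -/
theorem exists_pos_mul_dist_le_dist_kuratowskiMap (x₀ : α) {c : α →ᵇ ℝ}
    (hc : c ∈ convexHull ℝ (range (kuratowskiMap x₀))) :
    ∃ x, ∃ w > (0 : ℝ), ∀ y, w * dist x y ≤ dist (kuratowskiMap x₀ y) c := by
  obtain ⟨ι, _, w, z, hw₀, hw₁, hz, rfl⟩ := mem_convexHull_iff_exists_fintype.1 hc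
  choose x hx using hz
  obtain ⟨i₀, -, hi₀⟩ : ∃ i ∈ Finset.univ, (0 : ι → ℝ) i < w i :=
    Finset.exists_lt_of_sum_lt (by simp [hw₁])
  refine ⟨x i₀, w i₀, hi₀, fun y => ?_⟩
  have heval : kuratowskiMap x₀ y y - (∑ i, w i • z i) y = -∑ i, w i * dist (x i) y := by
    simp only [← hx, BoundedContinuousFunction.coe_sum, Finset.sum_apply,
      BoundedContinuousFunction.coe_smul, smul_eq_mul, kuratowskiMap_apply,
      mul_sub, Finset.sum_sub_distrib, ← Finset.sum_mul, hw₁, dist_self]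
    ring
  calc w i₀ * dist (x i₀) y ≤ ∑ i, w i * dist (x i) y :=
        Finset.single_le_sum (fun i _ => mul_nonneg (hw₀ i) dist_nonneg) (Finset.mem_univ i₀)
    _ = |kuratowskiMap x₀ y y - (∑ i, w i • z i) y| := by
        rw [heval, abs_neg, abs_of_nonneg (Finset.sum_nonneg fun i _ =>
          mul_nonneg (hw₀ i) dist_nonneg)]
    _ ≤ dist (kuratowskiMap x₀ y) (∑ i, w i • z i) := by
        rw [← Real.dist_eq]; exact BoundedContinuousFunction.dist_coe_le_dist y

def kuratowskiHull (x₀ : α) : Set (α →ᵇ ℝ) := convexHull ℝ (range (kuratowskiMap x₀))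

theorem convex_kuratowskiHull (x₀ : α) : Convex ℝ (kuratowskiHull x₀) := convex_convexHull ℝ _

noncomputable def toKuratowskiHull (x₀ : α) : α → kuratowskiHull x₀ :=
  codRestrict (kuratowskiMap x₀) _ fun x => subset_convexHull ℝ _ (mem_range_self x)

theorem isClosedEmbedding_toKuratowskiHull (x₀ : α) :
    IsClosedEmbedding (toKuratowskiHull x₀) := by
  have hiso : Isometry (toKuratowskiHull x₀) := isometry_kuratowskiMap x₀
  refine ⟨hiso.isEmbedding, isClosed_of_closure_subset fun c hc => ?_⟩
  obtain ⟨y, hy⟩ := mem_closure_iff_seq_limit.1 hc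
  choose y hyc using hy.1
  obtain ⟨x, w, hw, hx⟩ := exists_pos_mul_dist_le_dist_kuratowskiMap x₀ c.2
  have hdist : Tendsto (fun n => dist (toKuratowskiHull x₀ (y n)) c) atTop (𝓝 0) := by
    simpa only [hyc] using tendsto_iff_dist_tendsto_zero.1 hy.2
  have hyx : Tendsto y atTop (𝓝 x) := by
    refine tendsto_iff_dist_tendsto_zero.2 (squeeze_zero (fun _ => dist_nonneg) (fun n => ?_)
      (by simpa using hdist.const_mul w⁻¹))
    rw [dist_comm, le_inv_mul_iff₀ hw]
    exact hx (y n)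
  refine ⟨x, tendsto_nhds_unique ((hiso.continuous.tendsto x).comp hyx) ?_⟩
  simpa only [Function.comp_def, hyc] using hy.2

end Kuratowski

section Dugundji

open Metric

variable {Z : Type u} [MetricSpace Z] {A : Set Z}

theorem dist_lt_six_mul_of_dist_lt_half_infDist {p q a z : Z} (hz : z ∈ A)
    (hq : dist q p < infDist p A / 2) (ha : dist p a < 2 * infDist p A) :
    dist a z < 6 * dist q z := by
  have h₁ : infDist p A ≤ dist p z := infDist_le_dist_of_mem hz
  have h₂ := dist_triangle p q z
  have h₃ := dist_triangle4 a p q z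
  rw [dist_comm p q] at h₂
  rw [dist_comm a p, dist_comm p q] at h₃
  linarith

/-- Dugundji's partition of unity on `Aᶜ`: each `φ i` is supported in a ball around `i` of
radius `infDist i A / 2`, and `a i ∈ A` is a point with `dist i (a i) < 2 * infDist i A`. -/
theorem exists_partitionOfUnity_compl_dist_lt (hA : IsClosed A) (hne : A.Nonempty) :
    ∃ (φ : PartitionOfUnity (Aᶜ : Set Z) (Aᶜ : Set Z)) (a : (Aᶜ : Set Z) → Z), (∀ i, a i ∈ A) ∧
      ∀ i q, φ i q ≠ 0 → ∀ z ∈ A, dist (a i) z < 6 * dist (q : Z) z := by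
  have hpos : ∀ p : (Aᶜ : Set Z), 0 < infDist (p : Z) A := fun p =>
    (hA.notMem_iff_infDist_pos hne).1 p.2
  set U : (Aᶜ : Set Z) → Set (Aᶜ : Set Z) :=
    fun p => Subtype.val ⁻¹' ball (p : Z) (infDist (p : Z) A / 2)
  have hUo : ∀ p, IsOpen (U p) := fun p => isOpen_ball.preimage continuous_subtype_val
  have hUcov : univ ⊆ ⋃ p, U p := fun q _ =>
    mem_iUnion.2 ⟨q, mem_ball_self (half_pos (hpos q))⟩
  obtain ⟨φ, hφ⟩ := PartitionOfUnity.exists_isSubordinate isClosed_univ U hUo hUcov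
  have hsel : ∀ p : (Aᶜ : Set Z), ∃ a ∈ A, dist (p : Z) a < 2 * infDist (p : Z) A := fun p =>
    (infDist_lt_iff hne).1 (by linarith [hpos p])
  choose a haA ha using hsel
  refine ⟨φ, a, haA, fun i q hiq z hz => ?_⟩
  have hqU : q ∈ U i := hφ i (subset_closure hiq)
  exact dist_lt_six_mul_of_dist_lt_half_infDist hz hqU (ha i)

/-- **Dugundji extension theorem**. -/
theorem exists_continuous_extension_mem_convexHull {E : Type*} [NormedAddCommGroup E]
    [NormedSpace ℝ E] (hA : IsClosed A) (hne : A.Nonempty) (f : A → E) (hf : Continuous f) :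
    ∃ g : Z → E, Continuous g ∧ (∀ a : A, g a = f a) ∧ ∀ z, g z ∈ convexHull ℝ (range f) := by
  classical
  obtain ⟨φ, a, haA, hφa⟩ := exists_partitionOfUnity_compl_dist_lt hA hne
  set b : (Aᶜ : Set Z) → E := fun i => f ⟨a i, haA i⟩
  set g : Z → E := fun z => if hz : z ∈ A then f ⟨z, hz⟩ else ∑ᶠ i, φ i ⟨z, hz⟩ • b i with hg
  have hgA : ∀ a : A, g a = f a := fun a => dif_pos a.2
  have hgAc : ∀ {t : Set E} (q : (Aᶜ : Set Z)), Convex ℝ t → (∀ i, φ i q ≠ 0 → b i ∈ t) →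
      g q ∈ t := fun q ht hb => by
    simp only [hg, dif_neg q.2]
    exact φ.finsum_smul_mem_convex (g := fun i _ => b i) (mem_univ q) hb ht
  refine ⟨g, continuous_iff_continuousAt.2 fun z => ?_, hgA, fun z => ?_⟩
  · by_cases hz : z ∈ A
    · refine Metric.continuousAt_iff.2 fun ε hε => ?_
      obtain ⟨δ, hδ, hfδ⟩ := Metric.continuousAt_iff.1 hf.continuousAt ε hε
      refine ⟨δ / 6, by positivity, fun {y} hy => ?_⟩
      rw [hgA ⟨z, hz⟩]
      by_cases hyA : y ∈ A
      · rw [hgA ⟨y, hyA⟩]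
        exact hfδ (by change dist y z < δ; linarith)
      · refine hgAc ⟨y, hyA⟩ (convex_ball _ _) fun i hi => hfδ ?_
        change dist (a i) z < δ
        linarith [hφa i ⟨y, hyA⟩ hi z hz]
    · have hcont : ContinuousOn g Aᶜ := by
        rw [continuousOn_iff_continuous_domRestrict]
        convert φ.continuous_finsum_smul fun i _ _ => continuousAt_const (y := b i) using 2 with q
        exact dif_neg q.2
      exact hcont.continuousAt (hA.isOpen_compl.mem_nhds hz)
  · by_cases hz : z ∈ A
    · rw [hgA ⟨z, hz⟩]
      exact subset_convexHull ℝ _ (mem_range_self _)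
    · exact hgAc ⟨z, hz⟩ (convex_convexHull ℝ _) fun i _ =>
        subset_convexHull ℝ _ (mem_range_self _)

end Dugundji

section Weight

open Cardinal Metric

theorem tweight_le_mk {Y : Type u} [TopologicalSpace Y] {B : Set (Set Y)}
    (hB : IsTopologicalBasis B) : tweight Y ≤ #B :=
  csInf_le' ⟨B, hB, rfl⟩

theorem exists_isTopologicalBasis_mk_eq_tweight (Y : Type u) [TopologicalSpace Y] :
    ∃ B : Set (Set Y), IsTopologicalBasis B ∧ #B = tweight Y :=
  csInf_mem (s := {c | ∃ B : Set (Set Y), IsTopologicalBasis B ∧ #B = c})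
    ⟨_, _, isTopologicalBasis_opens, rfl⟩

theorem exists_dense_mk_le_tweight (Y : Type u) [TopologicalSpace Y] :
    ∃ D : Set Y, Dense D ∧ #D ≤ tweight Y := by
  obtain ⟨B, hB, hcard⟩ := exists_isTopologicalBasis_mk_eq_tweight Y
  choose c hc using fun V : {V : B // (V : Set Y).Nonempty} => V.2
  refine ⟨range c, hB.dense_iff.2 fun V hVB hV => ⟨_, hc ⟨⟨V, hVB⟩, hV⟩, mem_range_self _⟩, ?_⟩
  rw [← hcard]
  exact mk_range_le.trans (mk_subtype_le _)

theorem tweight_prod_le (Y W : Type u) [TopologicalSpace Y] [TopologicalSpace W] :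
    tweight (Y × W) ≤ max (max (tweight Y) (tweight W)) ℵ₀ := by
  obtain ⟨BY, hBY, hcY⟩ := exists_isTopologicalBasis_mk_eq_tweight Y
  obtain ⟨BW, hBW, hcW⟩ := exists_isTopologicalBasis_mk_eq_tweight W
  rw [← hcY, ← hcW]
  exact (tweight_le_mk (hBY.prod hBW)).trans (mk_image2_le.trans (mul_le_max _ _))

/-- The balls of radius `1 / (n + 1)` around the points of a dense set form a basis. -/
theorem tweight_le_max_mk_of_dense {Y : Type u} [MetricSpace Y] {D : Set Y} (hD : Dense D) :
    tweight Y ≤ max #D ℵ₀ := by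
  have hB : IsTopologicalBasis
      (range fun p : D × ULift.{u} ℕ => ball (p.1 : Y) (1 / (p.2.down + 1))) := by
    refine isTopologicalBasis_of_isOpen_of_nhds (by rintro - ⟨p, rfl⟩; exact isOpen_ball) ?_
    intro y V hyV hV
    obtain ⟨ε, hε, hball⟩ := Metric.isOpen_iff.1 hV y hyV
    obtain ⟨n, hn⟩ := exists_nat_one_div_lt (half_pos hε)
    obtain ⟨d, hdD, hd⟩ := hD.exists_dist_lt y (Nat.one_div_pos_of_nat (n := n))
    refine ⟨_, ⟨(⟨d, hdD⟩, ⟨n⟩), rfl⟩, hd, fun x hx => hball ?_⟩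
    have hx : dist x d < 1 / (n + 1) := hx
    rw [mem_ball, dist_comm y d] at *
    linarith [dist_triangle x d y]
  refine (tweight_le_mk hB).trans (mk_range_le.trans ?_)
  rw [mk_prod, mk_uLift, mk_nat]
  simp only [lift_aleph0, lift_id]
  exact (mul_le_max _ _).trans (by simp)

theorem tweight_le_max_mk_of_subset_closure {Y : Type u} [MetricSpace Y] {s S : Set Y}
    (hSs : S ⊆ s) (hsS : s ⊆ closure S) : tweight s ≤ max #S ℵ₀ := by
  have hD : Dense (Subtype.val ⁻¹' S : Set s) := by
    rwa [Subtype.dense_iff, Subtype.image_preimage_coe, inter_eq_right.2 hSs]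
  refine (tweight_le_max_mk_of_dense hD).trans (max_le_max_right _ ?_)
  exact mk_preimage_of_injective _ _ Subtype.val_injective

end Weight

section ConvexHullDensity

open Cardinal

/-- The hull of each finite subset of `D` is compact, hence separable; a countable dense subset
of each of them gives `S`. -/
theorem exists_subset_convexHull_mk_le {E : Type u} [NormedAddCommGroup E] [NormedSpace ℝ E]
    {T D : Set E} (hDT : D ⊆ T) (hTD : T ⊆ closure D) :
    ∃ S ⊆ convexHull ℝ T, convexHull ℝ T ⊆ closure S ∧ #S ≤ max #D ℵ₀ := by
  classical
  set K : Finset D → Set E := fun F => convexHull ℝ (Subtype.val '' (F : Set D))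
  have hK : ∀ F, IsSeparable (K F) := fun F =>
    ((F.finite_toSet.image _).isCompact_convexHull ℝ).isSeparable
  choose c hcK hcc hKc using fun F => (hK F).exists_countable_dense_subset
  refine ⟨⋃ F, c F, iUnion_subset fun F => (hcK F).trans (convexHull_mono ?_), ?_, ?_⟩
  · exact (image_subset_iff.2 fun d _ => d.2).trans hDT
  · have hD : convexHull ℝ D ⊆ closure (⋃ F, c F) := by
      rw [convexHull_eq_union_convexHull_finite_subsets]
      refine iUnion₂_subset fun t ht => ?_
      have htK : convexHull ℝ ↑t ⊆ K (t.subtype (· ∈ D)) :=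
        convexHull_mono fun y hy => ⟨⟨y, ht hy⟩, Finset.mem_subtype.2 hy, rfl⟩
      exact htK.trans ((hKc _).trans (closure_mono (subset_iUnion c _)))
    refine convexHull_min (hTD.trans (closure_mono (subset_convexHull ℝ D)))
      (convex_convexHull ℝ D).closure |>.trans ?_
    exact closure_minimal hD isClosed_closure
  · calc #(⋃ F, c F) ≤ #(Finset D) * ⨆ F, #(c F) := mk_iUnion_le c
      _ ≤ max ℵ₀ #D * ℵ₀ := by
          gcongr
          · exact (mk_le_of_surjective List.toFinset_surjective).trans (mk_list_le_max _)
          · exact ciSup_le' fun F => le_aleph0_iff_set_countable.2 (hcc F)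
      _ ≤ max #D ℵ₀ := by
          rw [max_comm]
          exact mul_le_max_of_aleph0_le_right le_rfl |>.trans (by simp)

end ConvexHullDensity

theorem tweight_kuratowskiHull_le {α : Type u} [MetricSpace α] (x₀ : α) :
    tweight (kuratowskiHull x₀) ≤ max (tweight α) Cardinal.aleph0 := by
  obtain ⟨D, hD, hDcard⟩ := exists_dense_mk_le_tweight α
  obtain ⟨S, hSC, hCS, hScard⟩ := exists_subset_convexHull_mk_le (image_subset_range _ D)
    ((isometry_kuratowskiMap x₀).continuous.range_subset_closure_image_dense hD)
  refine (tweight_le_max_mk_of_subset_closure hSC hCS).trans (max_le ?_ (le_max_right _ _))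
  exact hScard.trans (max_le_max_right _ (Cardinal.mk_image_le.trans hDcard))

theorem Continuous.isClosedEmbedding_prodMk {X Y W : Type*} [TopologicalSpace X]
    [TopologicalSpace Y] [TopologicalSpace W] [T2Space Y] {g : X → Y} {f : X → W}
    (hg : Continuous g) (hf : IsClosedEmbedding f) : IsClosedEmbedding fun x => (g x, f x) := by
  have hgraph : IsClosedEmbedding fun x => (g x, x) := by
    refine ⟨.of_comp (hg.prodMk continuous_id) continuous_snd .id, ?_⟩
    convert isClosed_eq continuous_fst (hg.comp continuous_snd)
    ext ⟨y, x⟩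
    simp [eq_comm]
  exact (IsClosedEmbedding.id.prodMap hf).comp hgraph

section FiberANR

variable (B0 : Type u) [TopologicalSpace B0]

theorem isFiberANR_of_isEmpty {Y : Type u} [TopologicalSpace Y] [MetrizableSpace Y] [IsEmpty Y]
    (π : Y → B0) : IsFiberANR B0 Y π := by
  refine ⟨inferInstance, continuous_of_discreteTopology, fun X' _ _ πX' _ i _ _ => ?_⟩
  refine ⟨∅, by simp [range_eq_empty], Subtype.val, continuous_subtype_val, ?_, ?_, ?_⟩ <;>
    exact fun u => u.2.elim

/-- The retraction is `u ↦ j (π u, g u)` on the whole space, where `g` is a Dugundji extension of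
the `C`-coordinate of `j⁻¹`. -/
theorem isFiberANR_prod_fst [MetrizableSpace B0] {E : Type u} [NormedAddCommGroup E]
    [NormedSpace ℝ E] {C : Set E} (hC : Convex ℝ C) : IsFiberANR B0 (B0 × C) Prod.fst := by
  rcases isEmpty_or_nonempty (B0 × C) with _ | ⟨⟨m₀⟩⟩
  · exact isFiberANR_of_isEmpty B0 Prod.fst
  refine ⟨inferInstance, continuous_fst, fun X' _ _ πX' hπX' j hj hjπ => ?_⟩
  let := metrizableSpaceMetric X'
  set e := hj.isEmbedding.toHomeomorph
  obtain ⟨g, hg, hgA, hgHull⟩ := exists_continuous_extension_mem_convexHull hj.isClosed_range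
    ⟨j m₀, mem_range_self m₀⟩ (fun u => ((e.symm u).2 : E)) (by fun_prop)
  have hgC : ∀ z, g z ∈ C := fun z =>
    hC.convexHull_subset_iff.2 (range_subset_iff.2 fun u => (e.symm u).2.2) (hgHull z)
  refine ⟨univ, Filter.univ_mem, fun u => j (πX' u, ⟨g u, hgC u⟩), by fun_prop,
    fun u => mem_range_self _, fun u => hjπ _, ?_⟩
  rintro u ⟨m, hm⟩
  have he : e.symm ⟨u, m, hm⟩ = m := e.symm_apply_eq.2 (Subtype.ext hm.symm)
  have hπ : πX' u = m.1 := by rw [← hm, hjπ]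
  have hgu : g u = m.2 := by rw [← he]; exact hgA ⟨u, m, hm⟩
  simp only [hπ, hgu, Subtype.coe_eta, Prod.mk.eta, hm]

end FiberANR

/-- Proposition 0.2: every metrizable space `X` over `B0` embeds as a closed subspace, by an
f.p. embedding, into an `ANR_{B0}`-space `M` with `w(M) ≤ max {w(X), w(B0), ℵ₀}`. -/
theorem exists_fiberANR_closedEmbedding (B0 : Type u) [TopologicalSpace B0] [MetrizableSpace B0]
    (X : Type u) [TopologicalSpace X] [MetrizableSpace X] (πX : X → B0) (hπX : Continuous πX) :
    ∃ (M : Type u) (_ : TopologicalSpace M) (πM : M → B0),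
      IsFiberANR B0 M πM ∧
      tweight M ≤ max (max (tweight X) (tweight B0)) Cardinal.aleph0 ∧
      ∃ i : X → M, IsClosedEmbedding i ∧ ∀ x, πM (i x) = πX x := by
  rcases isEmpty_or_nonempty X with _ | ⟨⟨x₀⟩⟩
  · exact ⟨X, _, πX, isFiberANR_of_isEmpty B0 πX, (le_max_left _ _).trans (le_max_left _ _),
      id, .id, fun _ => rfl⟩
  let := metrizableSpaceMetric X
  refine ⟨B0 × kuratowskiHull x₀, inferInstance, Prod.fst,
    isFiberANR_prod_fst B0 (convex_kuratowskiHull x₀), ?_, fun x => (πX x, toKuratowskiHull x₀ x),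
    hπX.isClosedEmbedding_prodMk (isClosedEmbedding_toKuratowskiHull x₀), fun _ => rfl⟩
  have hC := tweight_kuratowskiHull_le x₀
  refine (tweight_prod_le B0 _).trans (max_le (max_le ?_ ?_) (le_max_right _ _))
  · exact (le_max_right _ _).trans (le_max_left _ _)
  · exact hC.trans (max_le_max_right _ (le_max_left _ _))
end

section
/- Let Y be an ANR_{B0}-space, let A be a closed subspace of a metrizable space X over B0, let f, g : X → Y be f.p. maps, and let H : A × I → Y be an f.p. homotopy from f|A to g|A. Then there exist a neighbourhood U of A in X and an f.p. homotopy H̃ : U × I → Y from f|U to g|U such that H̃ restricted to A × I equals H. -/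
open Set Topology TopologicalSpace unitInterval

universe u

/-!
Homotopy extension is extension from the closed "frame" `A × I ∪ X × {0, 1}` of `X × I`, so it
suffices that an `ANR_{B0}` is an `ANE_{B0}`; the neighbourhood of the frame so obtained contains
a tube `U × I` around `A × I` because `I` is compact.

For `ANR ⇒ ANE`, `y ↦ (πY y, e y)` embeds `Y` over `B0` as a closed subset of `B0 × C`, where
`e : Y → (Y →ᵇ ℝ)` is the Kuratowski embedding and `C` the convex hull of its image, in which the
image is closed (Wojdysławski). A map from a closed set into `Y` extends into `C` by Dugundji's
theorem, and the fibrewise retraction of a neighbourhood of `Y` brings it back into `Y` near the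
closed set.
-/

open Metric BoundedContinuousFunction

section Kuratowski

variable {Y : Type*} [MetricSpace Y]

noncomputable def kuratowskiBCF (y₀ y : Y) : Y →ᵇ ℝ :=
  .mkOfBound ⟨fun a => dist y a - dist y₀ a, by fun_prop⟩ (2 * dist y y₀) fun a b => by
    have ha := abs_dist_sub_le y y₀ a
    have hb := abs_dist_sub_le y y₀ b
    rw [ContinuousMap.coe_mk, Real.dist_eq]
    linarith [abs_sub (dist y a - dist y₀ a) (dist y b - dist y₀ b)]

@[simp]
theorem kuratowskiBCF_apply (y₀ y a : Y) : kuratowskiBCF y₀ y a = dist y a - dist y₀ a := rfl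

theorem isometry_kuratowskiBCF (y₀ : Y) : Isometry (kuratowskiBCF y₀) := by
  refine Isometry.of_dist_eq fun y y' => le_antisymm ?_ ?_
  · refine (BoundedContinuousFunction.dist_le dist_nonneg).2 fun a => ?_
    simpa [Real.dist_eq] using abs_dist_sub_le y y' a
  · simpa [Real.dist_eq, abs_of_nonneg dist_nonneg] using
      dist_coe_le_dist (f := kuratowskiBCF y₀ y) (g := kuratowskiBCF y₀ y') y'

theorem exists_mul_dist_le_dist_kuratowskiBCF {y₀ : Y} {c : Y →ᵇ ℝ}
    (hc : c ∈ convexHull ℝ (range (kuratowskiBCF y₀))) :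
    ∃ ys : Y, ∃ w > 0, ∀ y, w * dist ys y ≤ dist c (kuratowskiBCF y₀ y) := by
  obtain ⟨ι, _, w, z, hw0, hw1, hz, rfl⟩ := mem_convexHull_iff_exists_fintype.1 hc
  choose ys hys using hz
  obtain ⟨i, hi⟩ : ∃ i, 0 < w i := by
    by_contra! h
    linarith [Finset.sum_nonpos fun i (_ : i ∈ Finset.univ) => h i]
  refine ⟨ys i, w i, hi, fun y => ?_⟩
  have hval : (∑ j, w j • z j) y - kuratowskiBCF y₀ y y = ∑ j, w j * dist (ys j) y := by
    simp [← hys, mul_sub, Finset.sum_sub_distrib, ← Finset.sum_mul, hw1]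
  calc w i * dist (ys i) y ≤ ∑ j, w j * dist (ys j) y :=
        Finset.single_le_sum (fun j _ => mul_nonneg (hw0 j) dist_nonneg) (Finset.mem_univ i)
    _ ≤ dist (∑ j, w j • z j) (kuratowskiBCF y₀ y) := by
        rw [← hval]
        exact (le_abs_self _).trans (Real.dist_eq _ _ ▸ dist_coe_le_dist y)

theorem mem_range_kuratowskiBCF_of_mem_closure {y₀ : Y} {c : Y →ᵇ ℝ}
    (hc : c ∈ convexHull ℝ (range (kuratowskiBCF y₀)))
    (hcl : c ∈ closure (range (kuratowskiBCF y₀))) : c ∈ range (kuratowskiBCF y₀) := by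
  obtain ⟨ys, w, hw, hys⟩ := exists_mul_dist_le_dist_kuratowskiBCF hc
  have hle : ∀ x ∈ closure (range (kuratowskiBCF y₀)),
      dist c (kuratowskiBCF y₀ ys) ≤ (1 + w⁻¹) * dist c x := by
    have hcont : Continuous fun x : Y →ᵇ ℝ => (1 + w⁻¹) * dist c x := by fun_prop
    refine closure_minimal ?_ (isClosed_le continuous_const hcont)
    rintro - ⟨u, rfl⟩
    have hu : dist ys u ≤ w⁻¹ * dist c (kuratowskiBCF y₀ u) := by
      rw [le_inv_mul_iff₀ hw]; exact hys u
    calc dist c (kuratowskiBCF y₀ ys)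
        ≤ dist c (kuratowskiBCF y₀ u) + dist (kuratowskiBCF y₀ u) (kuratowskiBCF y₀ ys) :=
          dist_triangle _ _ _
      _ ≤ dist c (kuratowskiBCF y₀ u) + w⁻¹ * dist c (kuratowskiBCF y₀ u) := by
          rw [(isometry_kuratowskiBCF y₀).dist_eq, dist_comm u]; gcongr
      _ = (1 + w⁻¹) * dist c (kuratowskiBCF y₀ u) := by ring
  exact ⟨ys, (dist_le_zero.1 (by simpa using hle c hcl)).symm⟩

theorem isClosedEmbedding_kuratowskiBCF_convexHull (y₀ : Y) :
    IsClosedEmbedding (codRestrict (kuratowskiBCF y₀) (convexHull ℝ (range (kuratowskiBCF y₀)))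
      fun y => subset_convexHull ℝ _ (mem_range_self y)) := by
  refine ⟨(isometry_kuratowskiBCF y₀).isEmbedding.codRestrict _ _, ?_⟩
  refine isClosed_of_closure_subset fun c hc => ?_
  rw [closure_subtype] at hc
  obtain ⟨y, hy⟩ := mem_range_kuratowskiBCF_of_mem_closure c.2
    (closure_mono (by rintro - ⟨-, ⟨y, rfl⟩, rfl⟩; exact mem_range_self y) hc)
  exact ⟨y, Subtype.ext hy⟩

end Kuratowski

section Dugundji

variable {Z E : Type*} [MetricSpace Z] [NormedAddCommGroup E] [NormedSpace ℝ E] {T : Set Z}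

theorem exists_continuous_compl_mem_convexHull_image (hT : IsClosed T) (hne : T.Nonempty)
    (φ : T → E) : ∃ F : C(↥Tᶜ, E), ∀ (w : ↥Tᶜ) (t₀ : T),
      F w ∈ convexHull ℝ (φ '' {t | dist t t₀ < 4 * dist (w : Z) t₀}) := by
  have hlocal : ∀ w : ↥Tᶜ, ∃ c : E, ∀ᶠ y : ↥Tᶜ in 𝓝 w,
      c ∈ ⋂ t₀ : T, convexHull ℝ (φ '' {t | dist t t₀ < 4 * dist (y : Z) t₀}) := by
    intro w
    have hr : 0 < infDist (w : Z) T := (hT.notMem_iff_infDist_pos hne).1 w.2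
    obtain ⟨tp, htpT, htp⟩ :=
      (infDist_lt_iff hne).1 (by linarith : infDist (w : Z) T < 2 * infDist (w : Z) T)
    refine ⟨φ ⟨tp, htpT⟩, ?_⟩
    filter_upwards [ball_mem_nhds w (by positivity : 0 < infDist (w : Z) T / 4)] with y hy
    refine mem_iInter.2 fun t₀ => subset_convexHull ℝ _ ⟨⟨tp, htpT⟩, ?_, rfl⟩
    have h₁ : infDist (w : Z) T ≤ dist (w : Z) t₀ := infDist_le_dist_of_mem t₀.2
    have h₂ := dist_triangle4 tp (w : Z) (y : Z) t₀
    have h₃ := dist_triangle (w : Z) (y : Z) t₀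
    rw [mem_ball, Subtype.dist_eq] at hy
    change dist tp t₀ < 4 * dist (y : Z) t₀
    -- with `r = infDist w T`: `r < 4/3 * dist y t₀`, so `dist tp t₀ < 9/4 * r + dist y t₀`
    linarith [dist_comm tp (w : Z), dist_comm (w : Z) (y : Z)]
  obtain ⟨F, hF⟩ := exists_continuous_forall_mem_convex_of_local_const
    (fun w => convex_iInter fun t₀ => convex_convexHull ℝ _) hlocal
  exact ⟨F, fun w => mem_iInter.1 (hF w)⟩

theorem exists_extension_mem_convexHull (hT : IsClosed T) (hne : T.Nonempty) {φ : T → E}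
    (hφ : Continuous φ) : ∃ Φ : Z → E, Continuous Φ ∧ (∀ t : T, Φ t = φ t) ∧
      ∀ z, Φ z ∈ convexHull ℝ (range φ) := by
  classical
  obtain ⟨F, hF⟩ := exists_continuous_compl_mem_convexHull_image hT hne φ
  let Φ : Z → E := fun z => if h : z ∈ T then φ ⟨z, h⟩ else F ⟨z, h⟩
  refine ⟨Φ, continuous_iff_continuousAt.2 fun z => ?_, fun t => dif_pos t.2, fun z => ?_⟩
  · by_cases hz : z ∈ T
    · refine Metric.continuousAt_iff.2 fun ε hε => ?_
      obtain ⟨δ, hδ, hφδ⟩ := Metric.continuousAt_iff.1 (hφ.continuousAt (x := ⟨z, hz⟩)) ε hε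
      refine ⟨δ / 4, by positivity, fun x hx => ?_⟩
      simp only [Φ, dif_pos hz]
      split_ifs with hxT
      · exact hφδ (by rw [Subtype.dist_eq]; linarith)
      · refine convexHull_min ?_ (convex_ball _ _) (hF ⟨x, hxT⟩ ⟨z, hz⟩)
        rintro - ⟨t, ht, rfl⟩
        exact hφδ (ht.trans_le (by linarith))
    · have hΦF : ContinuousOn Φ Tᶜ := continuousOn_iff_continuous_domRestrict.2
        (F.continuous.congr fun w => by simp [Φ, notMem_of_mem_compl w.2])
      exact hΦF.continuousAt (hT.isOpen_compl.mem_nhds hz)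
  · by_cases hz : z ∈ T
    · simp only [Φ, dif_pos hz]
      exact subset_convexHull ℝ _ (mem_range_self _)
    · simp only [Φ, dif_neg hz]
      exact convexHull_mono (image_subset_range _ _) (hF ⟨z, hz⟩ ⟨hne.some, hne.some_mem⟩)

end Dugundji

theorem Topology.IsClosedEmbedding.prodMk_of_continuous {Y B C : Type*} [TopologicalSpace Y]
    [TopologicalSpace B] [TopologicalSpace C] [T2Space B] [T2Space C] {f : Y → B}
    (hf : Continuous f) {g : Y → C} (hg : IsClosedEmbedding g) :
    IsClosedEmbedding fun y => (f y, g y) :=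
  .of_continuous_injective_isClosedMap (hf.prodMk hg.continuous)
    (fun _ _ h => hg.injective (congrArg Prod.snd h))
    (isProperMap_of_comp_of_t2 (hf.prodMk hg.continuous) continuous_snd hg.isProperMap).isClosedMap

theorem exists_nhdsSet_extension_of_retraction {B Y P Z : Type*} [TopologicalSpace Y]
    [TopologicalSpace P] [TopologicalSpace Z] {πY : Y → B} {πP : P → B} {πZ : Z → B}
    {i : Y → P} (hi : IsEmbedding i) (hiπ : ∀ y, πP (i y) = πY y)
    {W : Set P} (hW : W ∈ 𝓝ˢ (range i)) {r : W → P} (hr : Continuous r)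
    (hr_mem : ∀ w, r w ∈ range i) (hrπ : ∀ w, πP (r w) = πP w)
    (hr_id : ∀ w : W, (w : P) ∈ range i → r w = w)
    {T : Set Z} {K : T → Y} {Φ : Z → P} (hΦ : Continuous Φ) (hΦπ : ∀ z, πP (Φ z) = πZ z)
    (hΦK : ∀ t : T, Φ t = i (K t)) :
    ∃ V ∈ 𝓝ˢ T, ∃ g : V → Y, Continuous g ∧ (∀ v : V, πY (g v) = πZ v) ∧
      ∀ (a : Z) (ha : a ∈ T) (hv : a ∈ V), g ⟨a, hv⟩ = K ⟨a, ha⟩ := by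
  let j := hi.toHomeomorph
  let g : Φ ⁻¹' W → Y := fun v => j.symm ⟨r ⟨Φ v, v.2⟩, hr_mem _⟩
  have hig : ∀ v, i (g v) = r ⟨Φ v, v.2⟩ := fun v => congrArg Subtype.val (j.apply_symm_apply _)
  have hΦT : MapsTo Φ T (range i) := fun t ht => ⟨K ⟨t, ht⟩, (hΦK ⟨t, ht⟩).symm⟩
  refine ⟨Φ ⁻¹' W, hΦ.tendsto_nhdsSet hΦT hW, g,
    j.symm.continuous.comp (by fun_prop), fun v => ?_, fun a ha hv => hi.injective ?_⟩
  · rw [← hiπ, hig, hrπ, hΦπ]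
  · rw [hig, hr_id _ (hΦT ha)]
    exact hΦK ⟨a, ha⟩

theorem IsFiberANR.isFiberANE {B0 : Type u} [TopologicalSpace B0] [MetrizableSpace B0]
    {Y : Type u} [TopologicalSpace Y] {πY : Y → B0} (hY : IsFiberANR B0 Y πY) :
    IsFiberANE B0 Y πY := by
  obtain ⟨hYm, hπY, hretract⟩ := hY
  refine ⟨hYm, hπY, fun Z _ hZm πZ hπZ T hT K hK hKπ => ?_⟩
  rcases T.eq_empty_or_nonempty with rfl | ⟨t₀, ht₀⟩
  · exact ⟨∅, by simp, isEmptyElim, by fun_prop, isEmptyElim, fun _ h => h.elim⟩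
  let := metrizableSpaceMetric Z
  let := metrizableSpaceMetric Y
  let y₀ := K ⟨t₀, ht₀⟩
  have hi := (isClosedEmbedding_kuratowskiBCF_convexHull y₀).prodMk_of_continuous hπY
  obtain ⟨W, hW, r, hr, hr_mem, hrπ, hr_id⟩ :=
    hretract _ inferInstance inferInstance Prod.fst continuous_fst _ hi fun _ => rfl
  obtain ⟨Φ, hΦ, hΦK, hΦC⟩ :=
    exists_extension_mem_convexHull hT ⟨t₀, ht₀⟩ ((isometry_kuratowskiBCF y₀).continuous.comp hK)
  have hΦC' : ∀ z, Φ z ∈ convexHull ℝ (range (kuratowskiBCF y₀)) :=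
    fun z => convexHull_mono (range_comp_subset_range _ _) (hΦC z)
  exact exists_nhdsSet_extension_of_retraction hi.isEmbedding (fun _ => rfl) hW hr hr_mem hrπ hr_id
    (Φ := fun z => (πZ z, ⟨Φ z, hΦC' z⟩)) (by fun_prop) (fun _ => rfl)
    fun t => Prod.ext (hKπ t).symm (Subtype.ext (hΦK t))

theorem mem_nhdsSet_setOf_forall_prodMk_mem {X Y : Type*} [TopologicalSpace X]
    [TopologicalSpace Y] [CompactSpace Y] {s : Set X} {V : Set (X × Y)}
    (hV : V ∈ 𝓝ˢ (s ×ˢ univ)) : {x | ∀ y, (x, y) ∈ V} ∈ 𝓝ˢ s := by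
  refine mem_nhdsSet_iff_forall.2 fun x hx => ?_
  have hVx := nhdsSet_mono (prod_mono (singleton_subset_iff.2 hx) subset_rfl) hV
  rwa [isCompact_singleton.nhdsSet_prod_eq isCompact_univ, nhdsSet_singleton, nhdsSet_univ,
    Filter.mem_prod_top] at hVx

theorem exists_continuousOn_homotopy_frame {X Y : Type*} [TopologicalSpace X] [TopologicalSpace Y]
    {A : Set X} (hA : IsClosed A) {f g : X → Y} (hf : Continuous f) (hg : Continuous g)
    {H : A × I → Y} (hH : Continuous H) (hH0 : ∀ a, H (a, 0) = f a) (hH1 : ∀ a, H (a, 1) = g a) :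
    ∃ K : X × I → Y, ContinuousOn K (Prod.fst ⁻¹' A ∪ Prod.snd ⁻¹' {0, 1}) ∧
      (∀ x, K (x, 0) = f x) ∧ (∀ x, K (x, 1) = g x) ∧ ∀ (a : A) t, K (a, t) = H (a, t) := by
  classical
  let K : X × I → Y := fun p =>
    if h : p.1 ∈ A then H (⟨p.1, h⟩, p.2) else if p.2 = 0 then f p.1 else g p.1
  have hKA : ∀ (a : A) t, K (a, t) = H (a, t) := fun a t => dif_pos a.2
  have hK0 : ∀ x, K (x, 0) = f x := fun x => by
    by_cases hx : x ∈ A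
    · exact (hKA ⟨x, hx⟩ 0).trans (hH0 ⟨x, hx⟩)
    · simp [K, hx]
  have hK1 : ∀ x, K (x, 1) = g x := fun x => by
    by_cases hx : x ∈ A
    · exact (hKA ⟨x, hx⟩ 1).trans (hH1 ⟨x, hx⟩)
    · simp [K, hx]
  refine ⟨K, ?_, hK0, hK1, hKA⟩
  have hI : ∀ t : I, IsClosed (Prod.snd ⁻¹' {t} : Set (X × I)) :=
    fun t => isClosed_singleton.preimage continuous_snd
  rw [insert_eq, preimage_union]
  refine .union_of_isClosed ?_ (.union_of_isClosed ?_ ?_ (hI 0) (hI 1)) (hA.preimage continuous_fst)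
    ((hI 0).union (hI 1))
  · exact continuousOn_iff_continuous_domRestrict.2
      ((hH.comp (by fun_prop)).congr fun p => (hKA ⟨p.1.1, p.2⟩ p.1.2).symm)
  · exact (hf.comp continuous_fst).continuousOn.congr fun ⟨x, _⟩ ht => by
      obtain rfl := mem_singleton_iff.1 ht
      exact hK0 x
  · exact (hg.comp continuous_fst).continuousOn.congr fun ⟨x, _⟩ ht => by
      obtain rfl := mem_singleton_iff.1 ht
      exact hK1 x

/-- Proposition 0.4: homotopy extension for `ANR_{B0}`-spaces.  An f.p. homotopy on a closed
subset `A` of a metrizable space `X` over `B0` connecting `f|A` and `g|A` extends, over some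
neighbourhood `U` of `A`, to an f.p. homotopy connecting `f|U` and `g|U`. -/
theorem fiberANR_homotopy_extension (B0 : Type u) [TopologicalSpace B0] [MetrizableSpace B0]
    (Y : Type u) [TopologicalSpace Y] (πY : Y → B0) (hY : IsFiberANR B0 Y πY)
    (X : Type u) [TopologicalSpace X] [MetrizableSpace X] (πX : X → B0) (hπX : Continuous πX)
    (A : Set X) (hA : IsClosed A)
    (f g : X → Y) (hf : IsFPMap πX πY f) (hg : IsFPMap πX πY g)
    (H : A × unitInterval → Y) (hH : Continuous H)
    (hH0 : ∀ a : A, H (a, 0) = f a) (hH1 : ∀ a : A, H (a, 1) = g a)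
    (hHfp : ∀ (a : A) (t : unitInterval), πY (H (a, t)) = πX a) :
    ∃ U : Set X, U ∈ nhdsSet A ∧
      ∃ Ht : U × unitInterval → Y, Continuous Ht ∧
        (∀ u : U, Ht (u, 0) = f u) ∧ (∀ u : U, Ht (u, 1) = g u) ∧
        (∀ (u : U) (t : unitInterval), πY (Ht (u, t)) = πX u) ∧
        ∀ (a : A) (h : (a : X) ∈ U) (t : unitInterval), Ht (⟨a, h⟩, t) = H (a, t) := by
  let T : Set (X × I) := Prod.fst ⁻¹' A ∪ Prod.snd ⁻¹' {0, 1}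
  have hT : IsClosed T :=
    (hA.preimage continuous_fst).union ((toFinite _).isClosed.preimage continuous_snd)
  obtain ⟨K, hKc, hK0, hK1, hKH⟩ := exists_continuousOn_homotopy_frame hA hf.1 hg.1 hH hH0 hH1
  have hKπ : ∀ p : T, πY (K p) = πX (p : X × I).1 := by
    rintro ⟨⟨x, t⟩, hx | ht | ht⟩
    · simpa only [hKH ⟨x, hx⟩] using hHfp ⟨x, hx⟩ t
    · obtain rfl : t = 0 := ht
      simpa only [hK0] using hf.2 x
    · obtain rfl : t = 1 := ht
      simpa only [hK1] using hg.2 x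
  obtain ⟨V, hV, L, hL, hLπ, hLK⟩ := hY.isFiberANE.2.2 (X × I) _ inferInstance _
    (hπX.comp continuous_fst) T hT _ (continuousOn_iff_continuous_domRestrict.1 hKc) hKπ
  refine ⟨{x | ∀ t, (x, t) ∈ V}, mem_nhdsSet_setOf_forall_prodMk_mem
    (nhdsSet_mono (fun p hp => Or.inl hp.1) hV), fun p => L ⟨(p.1, p.2), p.1.2 p.2⟩,
    by fun_prop, fun u => ?_, fun u => ?_, fun u t => hLπ _, fun a ha t => ?_⟩
  · exact (hLK _ (Or.inr (Or.inl rfl)) _).trans (hK0 u)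
  · exact (hLK _ (Or.inr (Or.inr (mem_singleton _))) _).trans (hK1 u)
  · exact (hLK _ (Or.inl a.2) _).trans (hKH a t)
end

section
/- Every topological space X over a metrizable space B0 admits an ANR_{B0}-resolution over B0, i.e. there exist an inverse system X = (X_α, p_{αα'}, 𝒜) in Top_{B0} with every X_α an ANR_{B0}-space and a morphism p = (p_α) : X → X satisfying conditions (R1) and (R2). -/
open Set Topology TopologicalSpace unitInterval

universe u

/-!
The resolution is the system of all open neighbourhoods `Q` of the image of `X` in finite products
`B0 × C₁ × ⋯ × Cₙ` of absolute extensors `Cᵢ` receiving maps from `X`, bonded by the coordinate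
projections. Each `Q` is an `ANR_{B0}` because maps into the `Cᵢ` extend from closed sets.
Condition (R2) holds because maps that are `𝒰`-near on the image of `X` are `𝒰`-near on a smaller
open neighbourhood, which is again an index. Condition (R1) even holds with equality: an `ANR_{B0}`
`P` is a closed subset of `B0 × H` for a convex set `H` in a normed space
(Kuratowski–Wojdysławski), a neighbourhood of `P` there retracts onto it, and `H` is an absolute
extensor (Dugundji), so `B0 × H` is one of the products above.
-/

open Metric

/-- Dugundji's extension theorem. -/
theorem Convex.exists_continuous_extension {Z E : Type*} [MetricSpace Z] [NormedAddCommGroup E]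
    [NormedSpace ℝ E] {t : Set E} (ht : Convex ℝ t) {A : Set Z} (hA : IsClosed A)
    (hne : A.Nonempty) (f : A → E) (hf : Continuous f) (hft : ∀ a, f a ∈ t) :
    ∃ F : Z → E, Continuous F ∧ (∀ a : A, F a = f a) ∧ ∀ z, F z ∈ t := by
  classical
  -- Off `A`, select continuously from the hull of the values of `f` at the points of `A` closer
  -- to `y` than `3 * infDist y A`; these points approach `z ∈ A` as `y` does.
  set near : Z → Set E := fun y => convexHull ℝ (f '' {a | dist (a : Z) y < 3 * infDist y A})
  have hnear_t : ∀ y, near y ⊆ t := fun y =>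
    convexHull_min (image_subset_iff.2 fun a _ => hft a) ht
  obtain ⟨G, hG⟩ : ∃ G : C(↥Aᶜ, E), ∀ y : ↥Aᶜ, G y ∈ near y := by
    refine exists_continuous_forall_mem_convex_of_local_const (fun _ => convex_convexHull ℝ _)
      fun y => ?_
    have hρ : 0 < infDist (y : Z) A := (hA.notMem_iff_infDist_pos hne).1 y.2
    obtain ⟨a, ha, hya⟩ := (infDist_lt_iff hne).1
      (by linarith : infDist (y : Z) A < 2 * infDist (y : Z) A)
    have hopen : IsOpen {y' : ↥Aᶜ | dist a y' < 3 * infDist (y' : Z) A} :=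
      isOpen_lt (continuous_const.dist continuous_subtype_val)
        (continuous_const.mul ((continuous_infDist_pt A).comp continuous_subtype_val))
    refine ⟨f ⟨a, ha⟩, ?_⟩
    filter_upwards [hopen.mem_nhds (show dist a (y : Z) < _ by rw [dist_comm]; linarith)]
      with y' hy'
    exact subset_convexHull ℝ _ ⟨⟨a, ha⟩, hy', rfl⟩
  let F : Z → E := fun z => if hz : z ∈ A then f ⟨z, hz⟩ else G ⟨z, hz⟩
  have hFA : ∀ a : A, F a = f a := fun a => dif_pos a.2
  have hFAc : ∀ y : ↥Aᶜ, F y = G y := fun y => dif_neg y.2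
  refine ⟨F, continuous_iff_continuousAt.2 fun z => ?_, hFA, fun z => ?_⟩
  · by_cases hz : z ∈ A
    · refine Metric.continuousAt_iff.2 fun ε hε => ?_
      obtain ⟨δ, hδ, hfδ⟩ := Metric.continuousAt_iff.1 hf.continuousAt ε hε
      refine ⟨δ / 4, by positivity, fun y hy => ?_⟩
      rw [hFA ⟨z, hz⟩]
      by_cases hyA : y ∈ A
      · rw [hFA ⟨y, hyA⟩]
        exact hfδ (by rw [Subtype.dist_eq]; linarith)
      · rw [hFAc ⟨y, hyA⟩, ← mem_ball]
        refine convexHull_min ?_ (convex_ball _ _) (hG ⟨y, hyA⟩)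
        rintro _ ⟨a, ha, rfl⟩
        have hyz : infDist y A ≤ dist y z := infDist_le_dist_of_mem hz
        have hay : dist (a : Z) y < 3 * infDist y A := ha
        exact hfδ (by rw [Subtype.dist_eq]; linarith [dist_triangle (a : Z) y z])
    · have hG' : ContinuousOn F Aᶜ :=
        continuousOn_iff_continuous_domRestrict.2 (G.continuous.congr fun y => (hFAc y).symm)
      exact hG'.continuousAt (hA.isOpen_compl.mem_nhds hz)
  · by_cases hz : z ∈ A
    · exact hFA ⟨z, hz⟩ ▸ hft _
    · exact hFAc ⟨z, hz⟩ ▸ hnear_t z (hG ⟨z, hz⟩)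

noncomputable section

namespace BoundedContinuousFunction

variable {P : Type*} [MetricSpace P]

def kuratowski (p₀ p : P) : P →ᵇ ℝ :=
  mkOfBound ⟨fun q => dist p q - dist p₀ q, by fun_prop⟩ (2 * dist p p₀) fun x y => by
    have hx := abs_dist_sub_le p p₀ x
    have hy := abs_dist_sub_le p p₀ y
    rw [Real.dist_eq]
    simp only [ContinuousMap.coe_mk]
    rw [abs_le] at hx hy ⊢
    constructor <;> linarith

@[simp] lemma kuratowski_apply (p₀ p q : P) : kuratowski p₀ p q = dist p q - dist p₀ q := rfl

lemma isometry_kuratowski (p₀ : P) : Isometry (kuratowski p₀) := by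
  refine Isometry.of_dist_eq fun p p' => le_antisymm ?_ ?_
  · refine (dist_le dist_nonneg).2 fun q => ?_
    rw [Real.dist_eq, kuratowski_apply, kuratowski_apply, sub_sub_sub_cancel_right]
    exact abs_dist_sub_le _ _ _
  · calc dist p p' = dist (kuratowski p₀ p p') (kuratowski p₀ p' p') := by
          simp [abs_of_nonneg dist_nonneg]
      _ ≤ dist (kuratowski p₀ p) (kuratowski p₀ p') := dist_coe_le_dist _

lemma mem_range_kuratowski_of_mem_closure {p₀ : P} {v : P →ᵇ ℝ}
    (hv : v ∈ convexHull ℝ (range (kuratowski p₀))) (hcl : v ∈ closure (range (kuratowski p₀))) :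
    v ∈ range (kuratowski p₀) := by
  obtain ⟨ι, _, w, z, hw₀, hw₁, hz, rfl⟩ := mem_convexHull_iff_exists_fintype.1 hv
  choose m hm using hz
  obtain ⟨i, hi⟩ : ∃ i, 0 < w i := by
    by_contra! h
    linarith [Finset.sum_nonpos fun i (_ : i ∈ Finset.univ) => h i]
  set v := ∑ j, w j • z j
  -- Evaluating at `p` sees the distance from `p` to every vertex `m j` of the combination.
  have hlow : ∀ p, w i * dist (m i) p ≤ dist v (kuratowski p₀ p) := by
    intro p
    have heval : v p - kuratowski p₀ p p = ∑ j, w j * dist (m j) p := by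
      simp only [v, coe_sum, coe_smul, Finset.sum_apply, smul_eq_mul, ← hm, kuratowski_apply,
        dist_self, zero_sub, sub_neg_eq_add, mul_sub, Finset.sum_sub_distrib, ← Finset.sum_mul,
        hw₁, one_mul, sub_add_cancel]
    calc w i * dist (m i) p ≤ ∑ j, w j * dist (m j) p :=
          Finset.single_le_sum (fun j _ => mul_nonneg (hw₀ j) dist_nonneg) (Finset.mem_univ i)
      _ ≤ dist (v p) (kuratowski p₀ p p) := by
          rw [← heval, Real.dist_eq]
          exact le_abs_self _
      _ ≤ _ := dist_coe_le_dist _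
  have hinf : w i * dist v (kuratowski p₀ (m i)) / (1 + w i) ≤ 0 := by
    rw [← infDist_zero_of_mem_closure hcl, le_infDist ⟨_, mem_range_self p₀⟩]
    rintro _ ⟨p, rfl⟩
    rw [div_le_iff₀ (by positivity)]
    have htri := dist_triangle v (kuratowski p₀ p) (kuratowski p₀ (m i))
    rw [(isometry_kuratowski p₀).dist_eq, dist_comm p] at htri
    nlinarith [hlow p]
  refine ⟨m i, (eq_of_dist_eq_zero (le_antisymm ?_ dist_nonneg)).symm⟩
  rw [div_le_iff₀ (by positivity), zero_mul] at hinf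
  nlinarith

def kuratowskiHull (p₀ : P) : P → convexHull ℝ (range (kuratowski p₀)) :=
  Set.codRestrict (kuratowski p₀) _ fun p => subset_convexHull ℝ _ (mem_range_self p)

/-- The Kuratowski–Wojdysławski theorem. -/
lemma isClosedEmbedding_kuratowskiHull (p₀ : P) : IsClosedEmbedding (kuratowskiHull p₀) := by
  refine ⟨(isometry_kuratowski p₀).isEmbedding.codRestrict _ _, ?_⟩
  have hrange :
      range (kuratowskiHull p₀) = Subtype.val ⁻¹' closure (range (kuratowski p₀)) := by
    ext v
    refine ⟨?_, fun h => ?_⟩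
    · rintro ⟨p, rfl⟩
      exact subset_closure (mem_range_self p)
    · obtain ⟨p, hp⟩ := mem_range_kuratowski_of_mem_closure v.2 h
      exact ⟨p, Subtype.ext hp⟩
  rw [hrange]
  exact isClosed_closure.preimage continuous_subtype_val

end BoundedContinuousFunction

end

theorem Topology.IsClosedEmbedding.prodMk_of_continuous_s5 {B P H : Type*} [TopologicalSpace B]
    [TopologicalSpace P] [TopologicalSpace H] [T2Space B] [T2Space P] {π : P → B}
    (hπ : Continuous π) {k : P → H} (hk : IsClosedEmbedding k) :
    IsClosedEmbedding fun p => (π p, k p) :=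
  (IsClosedEmbedding.id.prodMap hk).comp
    (Function.LeftInverse.isClosedEmbedding (f := Prod.snd) (fun _ => rfl) continuous_snd
      (hπ.prodMk continuous_id))

def IsAbsoluteExtensor (C : Type u) [TopologicalSpace C] : Prop :=
  ∀ (Z : Type u) [TopologicalSpace Z] [MetrizableSpace Z] (A : Set Z), IsClosed A → A.Nonempty →
    ∀ f : A → C, Continuous f → ∃ F : Z → C, Continuous F ∧ ∀ a : A, F a = f a

lemma IsAbsoluteExtensor.of_homeomorph {C D : Type u} [TopologicalSpace C] [TopologicalSpace D]
    (hC : IsAbsoluteExtensor C) (φ : C ≃ₜ D) : IsAbsoluteExtensor D := by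
  intro Z _ _ A hA hne f hf
  obtain ⟨F, hF, hFA⟩ := hC Z A hA hne (φ.symm ∘ f) (φ.symm.continuous.comp hf)
  exact ⟨φ ∘ F, φ.continuous.comp hF, fun a => by simp [hFA]⟩

lemma Convex.isAbsoluteExtensor {E : Type u} [NormedAddCommGroup E] [NormedSpace ℝ E]
    {T : Set E} (hT : Convex ℝ T) : IsAbsoluteExtensor T := by
  intro Z _ _ A hA hne f hf
  let _ := metrizableSpaceMetric Z
  obtain ⟨F, hF, hFA, hFT⟩ := hT.exists_continuous_extension hA hne (fun a => (f a : E))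
    (continuous_subtype_val.comp hf) fun a => (f a).2
  exact ⟨fun z => ⟨F z, hFT z⟩, hF.subtype_mk _, fun a => Subtype.ext (hFA a)⟩

theorem IsFiberANE.isFiberANR {B0 Y : Type u} [TopologicalSpace B0] [TopologicalSpace Y]
    {πY : Y → B0} (hY : IsFiberANE B0 Y πY) : IsFiberANR B0 Y πY := by
  refine ⟨hY.1, hY.2.1, fun W _ _ πW hπW i hi hiπ => ?_⟩
  let φ := hi.isEmbedding.toHomeomorph
  obtain ⟨U, hU, g, hg, hgπ, hgA⟩ := hY.2.2 W ‹_› ‹_› πW hπW (range i) hi.isClosed_range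
    φ.symm φ.symm.continuous fun a => by
      obtain ⟨_, y, rfl⟩ := a
      rw [hi.isEmbedding.toHomeomorph_symm_apply, hiπ]
  refine ⟨U, hU, fun u => i (g u), hi.continuous.comp hg, fun u => mem_range_self _,
    fun u => by rw [hiπ, hgπ], ?_⟩
  rintro ⟨w, hwU⟩ hw
  show i (g ⟨w, hwU⟩) = w
  rw [hgA w hw hwU]
  exact congrArg Subtype.val (φ.apply_symm_apply _)

theorem isFiberANE_of_isOpen {B0 : Type u} [TopologicalSpace B0] [MetrizableSpace B0]
    {ι : Type u} [Finite ι] {C : ι → Type u} [∀ i, TopologicalSpace (C i)]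
    [∀ i, MetrizableSpace (C i)] (hC : ∀ i, IsAbsoluteExtensor (C i))
    {Q : Set (B0 × ∀ i, C i)} (hQ : IsOpen Q) : IsFiberANE B0 Q fun q => q.1.1 := by
  refine ⟨inferInstance, continuous_subtype_val.fst, fun Z _ _ πZ hπZ A hA f hf hfπ => ?_⟩
  rcases A.eq_empty_or_nonempty with rfl | hne
  · exact ⟨∅, by simp, fun u => u.2.elim, continuous_of_discreteTopology, fun u => u.2.elim,
      fun a ha => ha.elim⟩
  choose Φ hΦ hΦA using fun i => hC i Z A hA hne (fun a => (f a).1.2 i)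
    ((continuous_apply i).comp (continuous_snd.comp (continuous_subtype_val.comp hf)))
  let Ψ : Z → B0 × ∀ i, C i := fun z => (πZ z, fun i => Φ i z)
  have hΨ : Continuous Ψ := hπZ.prodMk (continuous_pi hΦ)
  have hΨA : ∀ a : A, Ψ a = f a := fun a => Prod.ext (hfπ a).symm (funext fun i => hΦA i a)
  refine ⟨Ψ ⁻¹' Q, (hQ.preimage hΨ).mem_nhdsSet.2 fun a ha => ?_, fun u => ⟨Ψ u, u.2⟩,
    (hΨ.comp continuous_subtype_val).subtype_mk _, fun u => rfl,
    fun a ha hu => Subtype.ext (hΨA ⟨a, ha⟩)⟩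
  show Ψ a ∈ Q
  exact hΨA ⟨a, ha⟩ ▸ (f ⟨a, ha⟩).2

theorem IsFiberANR.exists_retraction {B0 P W : Type u} [TopologicalSpace B0] [TopologicalSpace P]
    [TopologicalSpace W] [MetrizableSpace W] {πP : P → B0} {πW : W → B0}
    (hP : IsFiberANR B0 P πP) (hπW : Continuous πW) {e : P → W} (he : IsClosedEmbedding e)
    (heπ : ∀ p, πW (e p) = πP p) :
    ∃ O : Set W, IsOpen O ∧ range e ⊆ O ∧ ∃ ρ : O → P, Continuous ρ ∧
      (∀ w, πP (ρ w) = πW w) ∧ ∀ p (hp : e p ∈ O), ρ ⟨e p, hp⟩ = p := by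
  obtain ⟨U, hU, r, hr, hrR, hrπ, hrid⟩ := hP.2.2 W ‹_› ‹_› πW hπW e he heπ
  obtain ⟨O, hO, hRO, hOU⟩ := mem_nhdsSet_iff_exists.1 hU
  let φ := he.isEmbedding.toHomeomorph
  have hφ : ∀ w, e (φ.symm w) = w := fun w => congrArg Subtype.val (φ.apply_symm_apply w)
  refine ⟨O, hO, hRO, fun w => φ.symm ⟨r ⟨w, hOU w.2⟩, hrR _⟩,
    φ.symm.continuous.comp ((hr.comp (continuous_inclusion hOU)).subtype_mk _), fun w => ?_,
    fun p hp => ?_⟩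
  · rw [← heπ, hφ, hrπ]
  · simp only [hrid ⟨e p, hOU hp⟩ (mem_range_self p)]
    exact he.isEmbedding.toHomeomorph_symm_apply p

/-- Carriers are subsets of `X →₀ ℝ` only so that the charts of `X` form a type in universe `u`. -/
structure AEChart (X : Type u) [TopologicalSpace X] where
  carrier : Set (X →₀ ℝ)
  [topology : TopologicalSpace carrier]
  [metrizable : MetrizableSpace carrier]
  isAbsoluteExtensor : IsAbsoluteExtensor carrier
  toFun : X → carrier
  continuous_toFun : Continuous toFun

attribute [instance] AEChart.topology AEChart.metrizable

namespace AEChart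

variable {X : Type u} [TopologicalSpace X]

/-- The chart is `T` cut down to the span of `g`, lifted to `X →₀ ℝ` along
`Finsupp.linearCombination ℝ g`. -/
theorem exists_of_convex {E : Type u} [NormedAddCommGroup E] [NormedSpace ℝ E] {T : Set E}
    (hT : Convex ℝ T) {g : X → E} (hg : Continuous g) (hgT : ∀ x, g x ∈ T) :
    ∃ (c : AEChart X) (j : c.carrier → E), Continuous j ∧ (∀ y, j y ∈ T) ∧
      ∀ x, j (c.toFun x) = g x := by
  let θ := Finsupp.linearCombination ℝ g
  let T' : Set E := T ∩ LinearMap.range θ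
  have hgT' : ∀ x, g x ∈ T' := fun x => ⟨hgT x, Finsupp.single x 1, by simp [θ]⟩
  choose sec hsec using fun v : T' => v.2.2
  have hsec_inj : Function.Injective sec := fun v w h =>
    Subtype.ext (by rw [← hsec v, ← hsec w, h])
  let e := Equiv.ofInjective sec hsec_inj
  let _ : TopologicalSpace (range sec) := induced e.symm inferInstance
  let φ : range sec ≃ₜ T' := e.symm.toHomeomorphOfIsInducing (IsInducing.induced _)
  refine ⟨{ carrier := range sec
            metrizable := φ.isEmbedding.metrizableSpace
            isAbsoluteExtensor :=
              (hT.inter (LinearMap.range θ).convex).isAbsoluteExtensor.of_homeomorph φ.symm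
            toFun := fun x => φ.symm ⟨g x, hgT' x⟩
            continuous_toFun := φ.symm.continuous.comp (hg.subtype_mk _) },
    fun y => φ y, continuous_subtype_val.comp φ.continuous, fun y => (φ y).2.1, fun x => ?_⟩
  simp

end AEChart

section Resolution

variable {B0 X : Type u} [TopologicalSpace B0] [TopologicalSpace X] (πX : X → B0)

abbrev ChartProd (B0 : Type u) (F : Finset (AEChart X)) : Type u :=
  B0 × ∀ c : F, (c : AEChart X).carrier

def chartMap (F : Finset (AEChart X)) (x : X) : ChartProd B0 F :=
  (πX x, fun c => (c : AEChart X).toFun x)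

def ChartProd.restrict {F F' : Finset (AEChart X)} (h : F ⊆ F') (q : ChartProd B0 F') :
    ChartProd B0 F :=
  (q.1, fun c => q.2 ⟨c, h c.2⟩)

lemma ChartProd.continuous_restrict {F F' : Finset (AEChart X)} (h : F ⊆ F') :
    Continuous (ChartProd.restrict (B0 := B0) h) :=
  continuous_fst.prodMk (continuous_pi fun _ => (continuous_apply _).comp continuous_snd)

structure ResolutionIndex where
  charts : Finset (AEChart X)
  nbhd : Set (ChartProd B0 charts)
  isOpen_nbhd : IsOpen nbhd
  range_subset : range (chartMap πX charts) ⊆ nbhd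

abbrev resolutionSystem : FibInvSys B0 where
  Idx := ResolutionIndex πX
  le a b := ∃ h : a.charts ⊆ b.charts, MapsTo (ChartProd.restrict h) b.nbhd a.nbhd
  le_refl _ := ⟨subset_rfl, fun _ hq => hq⟩
  le_trans _ _ _ hab hbc := ⟨hab.fst.trans hbc.fst, hab.snd.comp hbc.snd⟩
  directed a b := by
    classical
    refine ⟨⟨a.charts ∪ b.charts,
      ChartProd.restrict Finset.subset_union_left ⁻¹' a.nbhd ∩
        ChartProd.restrict Finset.subset_union_right ⁻¹' b.nbhd,
      (a.isOpen_nbhd.preimage (ChartProd.continuous_restrict _)).inter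
        (b.isOpen_nbhd.preimage (ChartProd.continuous_restrict _)), ?_⟩,
      ⟨Finset.subset_union_left, fun _ hq => hq.1⟩, ⟨Finset.subset_union_right, fun _ hq => hq.2⟩⟩
    rintro _ ⟨x, rfl⟩
    exact ⟨a.range_subset (mem_range_self x), b.range_subset (mem_range_self x)⟩
  obj a := a.nbhd
  topInst _ := inferInstance
  proj _ q := q.1.1
  proj_cont _ := continuous_subtype_val.fst
  bond _ _ h := MapsTo.restrict _ _ _ h.snd
  bond_cont _ _ h := ((ChartProd.continuous_restrict _).comp continuous_subtype_val).subtype_mk _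
  bond_fp _ _ _ _ := rfl
  bond_id _ _ := rfl
  bond_comp _ _ _ _ _ _ := rfl

def resolutionMap (hπX : Continuous πX) : FibMapToSys X πX (resolutionSystem πX) where
  maps a x := ⟨chartMap πX a.charts x, a.range_subset (mem_range_self x)⟩
  cont _ := (hπX.prodMk (continuous_pi fun c => c.1.continuous_toFun)).subtype_mk _
  fp _ _ := rfl
  comm _ _ _ _ := rfl

theorem resolutionSystem_isFiberANR [MetrizableSpace B0] (a : (resolutionSystem πX).Idx) :
    IsFiberANR B0 ((resolutionSystem πX).obj a) ((resolutionSystem πX).proj a) :=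
  (isFiberANE_of_isOpen (fun c => c.1.isAbsoluteExtensor) a.isOpen_nbhd).isFiberANR

theorem resolutionMap_exists_factorization [MetrizableSpace B0] (hπX : Continuous πX)
    {P : Type u} [TopologicalSpace P] {πP : P → B0} (hP : IsFiberANR B0 P πP) {h : X → P}
    (hh : IsFPMap πX πP h) :
    ∃ (a : (resolutionSystem πX).Idx) (f : (resolutionSystem πX).obj a → P),
      IsFPMap ((resolutionSystem πX).proj a) πP f ∧
        ∀ x, f ((resolutionMap πX hπX).maps a x) = h x := by
  rcases isEmpty_or_nonempty P with hPe | ⟨⟨p₀⟩⟩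
  · have : IsEmpty X := ⟨fun x => hPe.elim (h x)⟩
    let a : ResolutionIndex πX := ⟨∅, ∅, isOpen_empty, by simp [range_eq_empty]⟩
    exact ⟨a, fun q => q.2.elim, ⟨continuous_of_discreteTopology, fun q => q.2.elim⟩,
      isEmptyElim⟩
  have := hP.1
  let _ : MetricSpace P := metrizableSpaceMetric P
  let H := convexHull ℝ (range (BoundedContinuousFunction.kuratowski p₀))
  let e : P → B0 × H := fun p => (πP p, BoundedContinuousFunction.kuratowskiHull p₀ p)
  have he : IsClosedEmbedding e := IsClosedEmbedding.prodMk_of_continuous_s5 hP.2.1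
    (BoundedContinuousFunction.isClosedEmbedding_kuratowskiHull p₀)
  obtain ⟨O, hO, heO, ρ, hρ, hρπ, hρe⟩ := hP.exists_retraction continuous_fst he fun _ => rfl
  obtain ⟨c, j, hj, hjH, hjh⟩ := AEChart.exists_of_convex (convex_convexHull ℝ _)
    ((BoundedContinuousFunction.isometry_kuratowski p₀).continuous.comp hh.1)
    fun x => subset_convexHull ℝ _ (mem_range_self (h x))
  let Θ : ChartProd B0 {c} → B0 × H := fun q =>
    (q.1, ⟨j (q.2 ⟨c, Finset.mem_singleton_self c⟩), hjH _⟩)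
  have hΘ : Continuous Θ :=
    continuous_fst.prodMk ((hj.comp ((continuous_apply _).comp continuous_snd)).subtype_mk _)
  have hΘe : ∀ x, Θ (chartMap πX {c} x) = e (h x) := fun x =>
    Prod.ext (hh.2 x).symm (Subtype.ext (hjh x))
  have hrange : range (chartMap πX {c}) ⊆ Θ ⁻¹' O := by
    rintro _ ⟨x, rfl⟩
    show Θ _ ∈ O
    rw [hΘe]
    exact heO (mem_range_self (h x))
  refine ⟨⟨{c}, Θ ⁻¹' O, hO.preimage hΘ, hrange⟩, fun q => ρ ⟨Θ q, q.2⟩,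
    ⟨hρ.comp ((hΘ.comp continuous_subtype_val).subtype_mk _), fun q => hρπ _⟩, fun x => ?_⟩
  show ρ ⟨Θ (chartMap πX {c} x), _⟩ = h x
  rw [← hρe (h x) (heO (mem_range_self _))]
  exact congrArg ρ (Subtype.ext (hΘe x))

lemma IsOpenCover.uNear_self {Y Z : Type u} [TopologicalSpace Y] {𝒰 : Set (Set Y)}
    (h𝒰 : IsOpenCover 𝒰) (g : Z → Y) : UNear 𝒰 g g := fun z => by
  obtain ⟨V, hV, hzV⟩ := mem_sUnion.1 (h𝒰.2.symm ▸ mem_univ (g z))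
  exact ⟨V, hV, hzV, hzV⟩

theorem resolutionMap_condR1 [MetrizableSpace B0] (hπX : Continuous πX) :
    CondR1 X πX (resolutionSystem πX) (resolutionMap πX hπX) := by
  intro P _ πP hP 𝒰 h𝒰 h hh
  obtain ⟨a, f, hf, hfh⟩ := resolutionMap_exists_factorization πX hπX hP hh
  refine ⟨a, f, hf, ?_⟩
  simpa only [hfh] using h𝒰.uNear_self h

theorem resolutionMap_condR2 (hπX : Continuous πX) :
    CondR2 X πX (resolutionSystem πX) (resolutionMap πX hπX) := by
  intro P _ πP _ 𝒰 h𝒰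
  refine ⟨𝒰, h𝒰, fun a f f' hf hf' hnear => ?_⟩
  -- shrink the neighbourhood of `a` to the open set where `f` and `f'` are `𝒰`-near
  let N : Set a.nbhd := ⋃ V ∈ 𝒰, f ⁻¹' V ∩ f' ⁻¹' V
  have hN : IsOpen N := isOpen_biUnion fun V hV =>
    ((h𝒰.1 V hV).preimage hf.1).inter ((h𝒰.1 V hV).preimage hf'.1)
  have hrange : range (chartMap πX a.charts) ⊆ Subtype.val '' N := by
    rintro _ ⟨x, rfl⟩
    obtain ⟨V, hV, hfV, hf'V⟩ := hnear x
    exact ⟨(resolutionMap πX hπX).maps a x, mem_biUnion hV ⟨hfV, hf'V⟩, rfl⟩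
  let a' : ResolutionIndex πX :=
    ⟨a.charts, Subtype.val '' N, a.isOpen_nbhd.isOpenMap_subtype_val N hN, hrange⟩
  have hle : (resolutionSystem πX).le a a' := ⟨subset_rfl, by rintro _ ⟨n, -, rfl⟩; exact n.2⟩
  refine ⟨a', hle, ?_⟩
  rintro ⟨_, n, hn, rfl⟩
  simp only [N, mem_iUnion] at hn
  obtain ⟨V, hV, hfV, hf'V⟩ := hn
  exact ⟨V, hV, hfV, hf'V⟩

end Resolution

/-- Theorem 1.2: every space `X` over a metrizable space `B0` admits an `ANR_{B0}`-resolution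
over `B0`. -/
theorem exists_fiberANR_resolution (B0 : Type u) [TopologicalSpace B0] [MetrizableSpace B0]
    (X : Type u) [TopologicalSpace X] (πX : X → B0) (hπX : Continuous πX) :
    ∃ (S : FibInvSys B0) (p : FibMapToSys X πX S),
      (∀ a : S.Idx, IsFiberANR B0 (S.obj a) (S.proj a)) ∧ IsFibResolution X πX S p :=
  ⟨resolutionSystem πX, resolutionMap πX hπX, resolutionSystem_isFiberANR πX,
    resolutionMap_condR1 πX hπX, resolutionMap_condR2 πX hπX⟩
end
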